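/- For every integer n ≥ 1 the q-Bernoulli polynomials satisfy the linear homogeneous recurrence B_{n,q}(qx) = q^n (x − 1/(q[2]_q)) B_{n-1,q}(x) − (1/[n]_q) Σ_{k=0}^{n-2} [n choose k]_q q^{k-1} b_{n-k,q} B_{k,q}(x), as an identity of real polynomials in x (the sum is empty when n = 1). -/

import Mathlib

open Polynomial Finset

/-- The q-integer [n]_q = 1 + q + ... + q^(n-1). -/
noncomputable def qInt (q : ℝ) (n : ℕ) : ℝ := ∑ i ∈ Finset.range n, q ^ i

/-- The q-factorial [n]_q! = [1]_q [2]_q ... [n]_q, with [0]_q! = 1. -/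
noncomputable def qFact (q : ℝ) : ℕ → ℝ
  | 0 => 1
  | n + 1 => qFact q n * qInt q (n + 1)

/-- The q-binomial coefficient [n choose k]_q = [n]_q! / ([k]_q! [n-k]_q!). -/
noncomputable def qBinom (q : ℝ) (n k : ℕ) : ℝ := qFact q n / (qFact q k * qFact q (n - k))

/-- The q-derivative on real polynomials, determined by D_q(x^n) = [n]_q x^(n-1). -/
noncomputable def qDeriv (q : ℝ) (p : Polynomial ℝ) : Polynomial ℝ :=
  p.sum fun n a => Polynomial.C (a * qInt q n) * Polynomial.X ^ (n - 1)

/-- The q-Bernoulli polynomials `B_{n,q}(x) = Σ_{k=0}^n [n choose k]_q b_{k,q} x^(n-k)`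
attached to the q-Bernoulli numbers (b_k). -/
noncomputable def qBernPoly (q : ℝ) (b : ℕ → ℝ) (n : ℕ) : Polynomial ℝ :=
  ∑ k ∈ Finset.range (n + 1), Polynomial.C (qBinom q n k * b k) * Polynomial.X ^ (n - k)

/-!
Let β(t) = Σ b_n tⁿ/[n]_q! and e = e_q. The defining relation is β(t)(e(t) − 1) = t, and
e(t) − e(qt) = (1 − q) t e(t) because (1 − q)[n]_q = 1 − qⁿ. With these, both sides of

  (1 − q) β(qt) β(t) = β(qt) − q β(t) − (1 − q) t β(qt)

become equal after multiplication by the nonzero series (e(t) − 1)(e(qt) − 1), so the identity holds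
in the domain ℝ⟦t⟧; its coefficients evaluate the convolutions Σᵢ [r choose i]_q qⁱ bᵢ b_{r−i}.
Independently, q-Pascal gives B_{N+1}(qx) = q^{N+1} x B_N(x) + B'_N(qx), where B'_N is built like
B_N from the shifted numbers b_{k+1}; the convolution identity expresses the coefficients of
B'_N(qx) through those of B_N and of the lower B_k, which is the recurrence.
-/

section QArith

variable {q : ℝ}

lemma qInt_add (q : ℝ) (a c : ℕ) : qInt q (a + c) = qInt q a + q ^ a * qInt q c := by
  simp only [qInt, Finset.sum_range_add, pow_add, Finset.mul_sum]

lemma qInt_two (q : ℝ) : qInt q 2 = 1 + q := by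
  simp [qInt, Finset.sum_range_succ]

lemma one_sub_mul_qInt (q : ℝ) (n : ℕ) : (1 - q) * qInt q n = 1 - q ^ n :=
  mul_neg_geom_sum q n

lemma qInt_pos (hq : 0 < q) {n : ℕ} (hn : n ≠ 0) : 0 < qInt q n :=
  Finset.sum_pos (fun i _ => pow_pos hq i) (Finset.nonempty_range_iff.mpr hn)

lemma qFact_pos (hq : 0 < q) : ∀ n, 0 < qFact q n
  | 0 => one_pos
  | n + 1 => mul_pos (qFact_pos hq n) (qInt_pos hq n.succ_ne_zero)

lemma qFact_succ (q : ℝ) (n : ℕ) : qFact q (n + 1) = qFact q n * qInt q (n + 1) := rfl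

lemma qBinom_zero_right (hq : 0 < q) (n : ℕ) : qBinom q n 0 = 1 := by
  simp [qBinom, qFact, (qFact_pos hq n).ne']

lemma qBinom_self (hq : 0 < q) (n : ℕ) : qBinom q n n = 1 := by
  simp [qBinom, qFact, (qFact_pos hq n).ne']

lemma qBinom_symm (q : ℝ) {n k : ℕ} (h : k ≤ n) : qBinom q n (n - k) = qBinom q n k := by
  rw [qBinom, qBinom, Nat.sub_sub_self h, mul_comm]

lemma qBinom_succ_self (hq : 0 < q) (n : ℕ) : qBinom q (n + 1) n = qInt q (n + 1) := by
  have hF := (qFact_pos hq n).ne'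
  have h1 : qInt q 1 = 1 := by simp [qInt]
  rw [qBinom, Nat.add_sub_cancel_left, qFact_succ, qFact_succ, qFact, zero_add, h1]
  field_simp

lemma qBinom_mul_qBinom (hq : 0 < q) {n k m : ℕ} (hmk : m ≤ k) (hkn : k ≤ n) :
    qBinom q n k * qBinom q k m = qBinom q n m * qBinom q (n - m) (k - m) := by
  have hF := fun j => (qFact_pos hq j).ne'
  rw [qBinom, qBinom, qBinom, qBinom, show n - m - (k - m) = n - k by omega]
  field_simp [hF]

lemma qBinom_succ_mul_qInt (hq : 0 < q) {n k : ℕ} (h : k ≤ n) :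
    qBinom q (n + 1) k * qInt q (n + 1 - k) = qInt q (n + 1) * qBinom q n k := by
  have hF := fun j => (qFact_pos hq j).ne'
  have hI := (qInt_pos hq (n := n - k + 1) (by omega)).ne'
  rw [qBinom, qBinom, show n + 1 - k = n - k + 1 by omega, qFact_succ, qFact_succ]
  field_simp [hF]

lemma qBinom_succ_succ (hq : 0 < q) {n k : ℕ} (h : k < n) :
    qBinom q (n + 1) (k + 1) = q ^ (n - k) * qBinom q n k + qBinom q n (k + 1) := by
  obtain ⟨d, rfl⟩ := Nat.exists_eq_add_of_lt h
  have hF := fun j => (qFact_pos hq j).ne'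
  have hI := fun j => (qInt_pos hq (n := j + 1) j.succ_ne_zero).ne'
  have hsplit := qInt_add q (d + 1) (k + 1)
  rw [show d + 1 + (k + 1) = k + d + 1 + 1 by omega] at hsplit
  rw [qBinom, qBinom, qBinom, show k + d + 1 + 1 - (k + 1) = d + 1 by omega,
    show k + d + 1 - k = d + 1 by omega, show k + d + 1 - (k + 1) = d by omega,
    qFact_succ q (k + d + 1), qFact_succ q k, qFact_succ q d]
  field_simp [hF, hI]
  linear_combination hsplit

end QArith

section QExpSeries

variable {q : ℝ}

noncomputable def qExpSeries (q : ℝ) (a : ℕ → ℝ) : PowerSeries ℝ :=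
  PowerSeries.mk fun n => a n / qFact q n

noncomputable def qExp (q : ℝ) : PowerSeries ℝ :=
  qExpSeries q 1

@[simp]
lemma coeff_qExpSeries (a : ℕ → ℝ) (n : ℕ) :
    PowerSeries.coeff n (qExpSeries q a) = a n / qFact q n :=
  PowerSeries.coeff_mk n _

lemma qExpSeries_mul (hq : 0 < q) (a c : ℕ → ℝ) :
    qExpSeries q a * qExpSeries q c
      = qExpSeries q fun n => ∑ k ∈ range (n + 1), qBinom q n k * a k * c (n - k) := by
  ext n
  have hF := fun j => (qFact_pos hq j).ne'
  rw [PowerSeries.coeff_mul, Finset.Nat.sum_antidiagonal_eq_sum_range_succ_mk,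
    coeff_qExpSeries, Finset.sum_div]
  refine Finset.sum_congr rfl fun k _ => ?_
  simp only [coeff_qExpSeries, qBinom]
  field_simp [hF]

lemma rescale_qExpSeries (a : ℕ → ℝ) :
    PowerSeries.rescale q (qExpSeries q a) = qExpSeries q fun n => q ^ n * a n := by
  ext n
  simp [mul_div_assoc]

lemma X_mul_qExpSeries (hq : 0 < q) (a : ℕ → ℝ) :
    PowerSeries.X * qExpSeries q a = qExpSeries q fun n => qInt q n * a (n - 1) := by
  ext (_ | n)
  · simp [qInt]
  · have := (qInt_pos hq n.succ_ne_zero).ne'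
    rw [PowerSeries.coeff_succ_X_mul, coeff_qExpSeries, coeff_qExpSeries, qFact_succ,
      Nat.add_sub_cancel]
    field_simp

end QExpSeries

section QBernoulliSeries

variable {q : ℝ} {b : ℕ → ℝ}

lemma sum_qBinom_mul_qBernoulli (hq : 0 < q) (hb0 : b 0 = 1)
    (hb : ∀ n : ℕ, 2 ≤ n → ∑ k ∈ Finset.range n, qBinom q n k * b k = 0) (n : ℕ) :
    ∑ k ∈ range (n + 1), qBinom q n k * b k = b n + if n = 1 then 1 else 0 := by
  rw [Finset.sum_range_succ, qBinom_self hq, one_mul, add_comm]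
  congr 1
  rcases (by omega : n = 0 ∨ n = 1 ∨ 2 ≤ n) with rfl | rfl | hn
  · simp
  · simp [qBinom_zero_right hq, hb0]
  · simp [hb n hn, show n ≠ 1 by omega]

lemma qExpSeries_mul_qExp (hq : 0 < q) (hb0 : b 0 = 1)
    (hb : ∀ n : ℕ, 2 ≤ n → ∑ k ∈ Finset.range n, qBinom q n k * b k = 0) :
    qExpSeries q b * qExp q = qExpSeries q b + PowerSeries.X := by
  ext n
  simp only [qExp, qExpSeries_mul hq, Pi.one_apply, mul_one, sum_qBinom_mul_qBernoulli hq hb0 hb,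
    map_add, coeff_qExpSeries, PowerSeries.coeff_X, add_div]
  split_ifs with hn
  · simp [hn, qFact, qInt]
  · simp

lemma one_sub_C_mul_X_mul_qExp (hq : 0 < q) :
    (1 - PowerSeries.C q) * PowerSeries.X * qExp q = qExp q - PowerSeries.rescale q (qExp q) := by
  ext n
  simp only [qExp, mul_assoc, X_mul_qExpSeries hq, rescale_qExpSeries, sub_mul, one_mul, map_sub,
    PowerSeries.coeff_C_mul, coeff_qExpSeries, Pi.one_apply, mul_one]
  linear_combination one_sub_mul_qInt q n / qFact q n

theorem one_sub_C_mul_rescale_qExpSeries_mul (hq : 0 < q) (hb0 : b 0 = 1)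
    (hb : ∀ n : ℕ, 2 ≤ n → ∑ k ∈ Finset.range n, qBinom q n k * b k = 0) :
    (1 - PowerSeries.C q) * (PowerSeries.rescale q (qExpSeries q b) * qExpSeries q b)
      = PowerSeries.rescale q (qExpSeries q b) - PowerSeries.C q * qExpSeries q b
        - (1 - PowerSeries.C q) * PowerSeries.X * PowerSeries.rescale q (qExpSeries q b) := by
  set β := qExpSeries q b
  set e := qExp q
  have hβ : β * e = β + PowerSeries.X := qExpSeries_mul_qExp hq hb0 hb
  have hβq : PowerSeries.rescale q β * PowerSeries.rescale q e
      = PowerSeries.rescale q β + PowerSeries.C q * PowerSeries.X := by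
    simpa [PowerSeries.rescale_X] using congrArg (PowerSeries.rescale q) hβ
  have he : (1 - PowerSeries.C q) * PowerSeries.X * e = e - PowerSeries.rescale q e :=
    one_sub_C_mul_X_mul_qExp hq
  have hE : e - 1 ≠ 0 := by
    intro h
    apply PowerSeries.X_ne_zero (R := ℝ)
    linear_combination β * h - hβ
  have hEq : PowerSeries.rescale q e - 1 ≠ 0 := by
    intro h
    apply mul_ne_zero ((map_ne_zero_iff _ PowerSeries.C_injective).mpr hq.ne')
      (PowerSeries.X_ne_zero (R := ℝ))
    linear_combination PowerSeries.rescale q β * h - hβq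
  apply mul_left_cancel₀ (mul_ne_zero hE hEq)
  linear_combination
    ((1 - PowerSeries.C q) * PowerSeries.rescale q β * (PowerSeries.rescale q e - 1)
        + PowerSeries.C q * (PowerSeries.rescale q e - 1)) * hβ
      + ((1 - PowerSeries.C q) * PowerSeries.X * e - (e - 1)) * hβq
      + PowerSeries.C q * PowerSeries.X * he

theorem one_sub_mul_sum_qBinom_pow_mul_mul (hq : 0 < q) (hb0 : b 0 = 1)
    (hb : ∀ n : ℕ, 2 ≤ n → ∑ k ∈ Finset.range n, qBinom q n k * b k = 0) (r : ℕ) :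
    (1 - q) * ∑ i ∈ range (r + 1), qBinom q r i * q ^ i * b i * b (r - i)
      = (q ^ r - q) * b r - (1 - q) * qInt q r * (q ^ (r - 1) * b (r - 1)) := by
  have h := congrArg (PowerSeries.coeff r) (one_sub_C_mul_rescale_qExpSeries_mul hq hb0 hb)
  rw [rescale_qExpSeries, qExpSeries_mul hq, mul_assoc, X_mul_qExpSeries hq] at h
  simp only [sub_mul, one_mul, map_sub, PowerSeries.coeff_C_mul, coeff_qExpSeries] at h
  have := (qFact_pos hq r).ne'
  field_simp at h
  linear_combination h

theorem qInt_two_mul_sum_qBinom_pow_mul_mul (hq : 0 < q) (hq1 : q ≠ 1) (hb0 : b 0 = 1)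
    (hb : ∀ n : ℕ, 2 ≤ n → ∑ k ∈ Finset.range n, qBinom q n k * b k = 0) (s : ℕ) :
    qInt q 2 * ∑ i ∈ range s, qBinom q (s + 1) i * q ^ i * b i * b (s + 1 - i)
      = -(q * qInt q (s + 1) * (qInt q 2 * b (s + 1) + q ^ s * b s)) := by
  have hT := one_sub_mul_sum_qBinom_pow_mul_mul hq hb0 hb (s + 1)
  have hb1 : qInt q 2 * b 1 = -1 := by
    have h := hb 2 le_rfl
    rw [Finset.sum_range_succ, Finset.sum_range_one, qBinom_zero_right hq, hb0,
      qBinom_succ_self hq 1] at h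
    linear_combination h
  rw [Finset.sum_range_succ, Finset.sum_range_succ, qBinom_succ_self hq, qBinom_self hq,
    Nat.add_sub_cancel_left, Nat.sub_self, hb0, Nat.add_sub_cancel] at hT
  apply mul_left_cancel₀ (sub_ne_zero.mpr hq1.symm)
  linear_combination qInt q 2 * hT - (1 - q) * qInt q (s + 1) * q ^ s * b s * hb1
    - (1 - q) * qInt q (s + 1) * q ^ s * b s * qInt_two q
    + qInt q 2 * q * b (s + 1) * one_sub_mul_qInt q (s + 1)

end QBernoulliSeries

section QBernPoly

variable {q : ℝ} {b : ℕ → ℝ}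

lemma coeff_qBernPoly (q : ℝ) (b : ℕ → ℝ) (n m : ℕ) :
    (qBernPoly q b n).coeff m = if m ≤ n then qBinom q n m * b (n - m) else 0 := by
  simp only [qBernPoly, finsetSum_coeff, coeff_C_mul_X_pow]
  split_ifs with hm
  · rw [Finset.sum_eq_single (n - m) (fun k hk hkm => if_neg (by simp at hk; omega)) (by simp),
      if_pos (by omega), qBinom_symm q hm]
  · exact Finset.sum_eq_zero fun k hk => if_neg (by simp at hk; omega)

lemma coeff_sum_C_mul_qBernPoly (c : ℕ → ℝ) (N m : ℕ) :
    (∑ k ∈ range N, C (c k) * qBernPoly q b k).coeff m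
      = ∑ i ∈ range (N - m), c (m + i) * (qBinom q (m + i) m * b i) := by
  simp only [finsetSum_coeff, coeff_C_mul, coeff_qBernPoly, mul_ite, mul_zero]
  rw [← Finset.sum_filter, show (range N).filter (m ≤ ·) = Ico m N by ext; simp; omega,
    Finset.sum_Ico_eq_sum_range]
  simp only [Nat.add_sub_cancel_left]

theorem qBernPoly_succ_comp_C_mul_X (hq : 0 < q) (b : ℕ → ℝ) (N : ℕ) :
    (qBernPoly q b (N + 1)).comp (C q * X)
      = C (q ^ (N + 1)) * X * qBernPoly q b N
        + (qBernPoly q (fun k => b (k + 1)) N).comp (C q * X) := by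
  ext m
  rw [coeff_add, comp_C_mul_X_coeff, comp_C_mul_X_coeff, mul_assoc, coeff_C_mul,
    ← pow_one X, coeff_X_pow_mul', coeff_qBernPoly, coeff_qBernPoly, coeff_qBernPoly]
  rcases m with _ | j
  · simp [qBinom_zero_right hq]
  rcases lt_trichotomy j N with hj | rfl | hj
  · simp only [Nat.add_sub_cancel, if_pos (show j + 1 ≤ N + 1 by omega),
      if_pos (show 1 ≤ j + 1 by omega), if_pos hj.le, if_pos (show j + 1 ≤ N by omega),
      qBinom_succ_succ hq hj, show N + 1 - (j + 1) = N - j by omega,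
      show N - (j + 1) + 1 = N - j by omega]
    rw [show q ^ (N + 1) = q ^ (N - j) * q ^ (j + 1) by rw [← pow_add]; congr 1; omega]
    ring
  · simp [qBinom_self hq, mul_comm]
  · simp [show ¬ j ≤ N by omega, show ¬ j + 1 ≤ N by omega]

theorem qBernPoly_shift_comp_C_mul_X (hq : 0 < q) (hq1 : q ≠ 1) (hb0 : b 0 = 1)
    (hb : ∀ n : ℕ, 2 ≤ n → ∑ k ∈ Finset.range n, qBinom q n k * b k = 0) (N : ℕ) :
    (qBernPoly q (fun k => b (k + 1)) N).comp (C q * X)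
      = -(C (q ^ (N + 1) * (1 / (q * qInt q 2))) * qBernPoly q b N)
        - C (1 / qInt q (N + 1)) * ∑ k ∈ range N,
            C (qBinom q (N + 1) k * (q ^ k / q) * b (N + 1 - k)) * qBernPoly q b k := by
  ext m
  rw [comp_C_mul_X_coeff, coeff_sub, coeff_neg, coeff_C_mul, coeff_C_mul,
    coeff_sum_C_mul_qBernPoly, coeff_qBernPoly, coeff_qBernPoly]
  split_ifs with hm
  swap
  · simp [show N - m = 0 by omega]
  obtain ⟨s, rfl⟩ : ∃ s, N = m + s := ⟨N - m, by omega⟩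
  have hsum : ∑ i ∈ range (m + s - m), qBinom q (m + s + 1) (m + i) * (q ^ (m + i) / q)
        * b (m + s + 1 - (m + i)) * (qBinom q (m + i) m * b i)
      = qBinom q (m + s + 1) m * (q ^ m / q)
        * ∑ i ∈ range s, qBinom q (s + 1) i * q ^ i * b i * b (s + 1 - i) := by
    rw [Nat.add_sub_cancel_left, Finset.mul_sum]
    refine Finset.sum_congr rfl fun i hi => ?_
    have h := qBinom_mul_qBinom hq (n := m + s + 1) (k := m + i) (m := m) (by omega)
      (by simp at hi; omega)
    rw [show m + s + 1 - m = s + 1 by omega, Nat.add_sub_cancel_left] at h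
    rw [show m + s + 1 - (m + i) = s + 1 - i by omega, pow_add]
    linear_combination (q ^ m * q ^ i / q * b (s + 1 - i) * b i) * h
  have hS := qInt_two_mul_sum_qBinom_pow_mul_mul hq hq1 hb0 hb s
  have habs := qBinom_succ_mul_qInt hq (n := m + s) (k := m) (by omega)
  rw [show m + s + 1 - m = s + 1 by omega] at habs
  rw [hsum, Nat.add_sub_cancel_left]
  have h2 := (qInt_pos hq (n := 2) (by omega)).ne'
  have hN := (qInt_pos hq (n := m + s + 1) (by omega)).ne'
  field_simp
  rw [pow_add, pow_add]
  linear_combination qBinom q (m + s + 1) m * q ^ m * hS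
    - q * q ^ m * (qInt q 2 * b (s + 1) + q ^ s * b s) * habs

end QBernPoly

/-- The q-Bernoulli polynomials satisfy the linear homogeneous recurrence
`B_{n,q}(qx) = q^n (x − 1/(q[2]_q)) B_{n-1,q}(x)
  − (1/[n]_q) Σ_{k=0}^{n-2} [n choose k]_q q^(k-1) b_{n-k,q} B_{k,q}(x)` for n ≥ 1. -/
theorem qBernoulli_recurrence (q : ℝ) (hq0 : 0 < q) (hq1 : q < 1)
    (b : ℕ → ℝ) (hb0 : b 0 = 1)
    (hb : ∀ n : ℕ, 2 ≤ n → ∑ k ∈ Finset.range n, qBinom q n k * b k = 0)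
    (n : ℕ) (hn : 1 ≤ n) :
    (qBernPoly q b n).comp (Polynomial.C q * Polynomial.X)
      = Polynomial.C (q ^ n) * (Polynomial.X - Polynomial.C (1 / (q * qInt q 2)))
          * qBernPoly q b (n - 1)
        - Polynomial.C (1 / qInt q n)
          * ∑ k ∈ Finset.range (n - 1),
              Polynomial.C (qBinom q n k * (q ^ k / q) * b (n - k)) * qBernPoly q b k := by
  obtain ⟨N, rfl⟩ : ∃ N, n = N + 1 := ⟨n - 1, by omega⟩
  rw [Nat.add_sub_cancel, qBernPoly_succ_comp_C_mul_X hq0,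
    qBernPoly_shift_comp_C_mul_X hq0 hq1.ne hb0 hb, map_mul]
  ring
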